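/- arXiv:1809.09768 — 2 statements merged into one kernel-verified Lean document; each statement's English description precedes it below -/
import Mathlib

section
/- If n is an even positive integer, then the binomial coefficient C(n-1, n/2) is odd if and only if n is a power of 2. -/
open Nat

private lemma key : ∀ m : ℕ, 1 ≤ m →
    ((Nat.choose (2 * m - 1) m) % 2 = 1 ↔ ∃ k : ℕ, m = 2 ^ k) := by
  intro m
  induction m using Nat.strong_induction_on with
  | _ m ih =>
    intro hm
    rcases eq_or_lt_of_le hm with h1 | h1
    · subst m; simp; exact ⟨0, rfl⟩
    have hc : Nat.choose (2 * m - 1) m % 2 =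
        (Nat.choose ((2 * m - 1) % 2) (m % 2) * Nat.choose ((2 * m - 1) / 2) (m / 2)) % 2 :=
      Choose.choose_modEq_choose_mod_mul_choose_div_nat (p := 2)
    rcases Nat.even_or_odd m with he | ho
    · obtain ⟨j, hj⟩ := he
      have hj' : m = 2 * j := by omega
      subst hj'
      have hjpos : 1 ≤ j := by omega
      have e1 : (2 * (2 * j) - 1) % 2 = 1 := by omega
      have e2 : (2 * (2 * j) - 1) / 2 = 2 * j - 1 := by omega
      have e3 : (2 * j) % 2 = 0 := by omega
      have e4 : (2 * j) / 2 = j := by omega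
      rw [hc, e1, e2, e3, e4]
      simp only [Nat.choose_one_right, Nat.choose_zero_right, one_mul, Nat.mod_mod_of_dvd]
      rw [ih j (by omega) hjpos]
      constructor
      · rintro ⟨k, hk⟩; exact ⟨k + 1, by rw [pow_succ]; omega⟩
      · rintro ⟨k, hk⟩
        match k with
        | 0 => omega
        | k + 1 => exact ⟨k, by rw [pow_succ] at hk; omega⟩
    · -- m odd, m > 1
      obtain ⟨t, ht⟩ := ho
      have e1 : (2 * m - 1) % 2 = 1 := by omega
      have e2 : (2 * m - 1) / 2 = m - 1 := by omega
      have e3 : m % 2 = 1 := by omega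
      have e4 : m / 2 = t := by omega
      rw [hc, e1, e2, e3, e4]
      have hm1 : m - 1 = 2 * t := by omega
      rw [hm1]
      have heven : 2 ∣ Nat.choose (2 * t) t := by
        have := Nat.two_dvd_centralBinom_of_one_le (n := t) (by omega)
        rwa [Nat.centralBinom] at this
      constructor
      · intro h
        simp [Nat.choose_self] at h
        omega
      · rintro ⟨k, hk⟩
        exfalso
        match k with
        | 0 => omega
        | k + 1 => rw [pow_succ] at hk; omega

theorem stmt_2 (n : ℕ) (hn : Even n) (hpos : 0 < n) :
    Odd (Nat.choose (n - 1) (n / 2)) ↔ ∃ k : ℕ, n = 2 ^ k := by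
  obtain ⟨m, hm⟩ := hn
  have hm' : n = 2 * m := by omega
  subst hm'
  have hmpos : 1 ≤ m := by omega
  have e4 : (2 * m) / 2 = m := by omega
  rw [e4, Nat.odd_iff, key m hmpos]
  constructor
  · rintro ⟨k, hk⟩; exact ⟨k + 1, by rw [pow_succ]; omega⟩
  · rintro ⟨k, hk⟩
    match k with
    | 0 => omega
    | k + 1 => exact ⟨k, by rw [pow_succ] at hk; omega⟩
end

section
/- Define Φ_{l,k} for positive integers 1 ≤ l ≤ k by: Φ_{l,k} = -C(k/2, l/2) if l, k both even; 0 if l odd, k even; C((k-1)/2, (l-1)/2) if l, k both odd; -C((k-1)/2, l/2) if l even, k odd. Then for odd positive integers n and m, the quantity Φ_Δ = Φ_{n,n+m-1} + (-1)^{(n+1)(m+1)} Φ_{m,n+m-1} equals 2·C((n+m-2)/2, (n-1)/2); in particular Φ_Δ is even. -/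
/-- The coefficients `Φ_{l,k}` from the multiplication formula in the Cohen group. -/
def Phi (l k : ℕ) : ℤ :=
  if l % 2 = 0 then
    if k % 2 = 0 then -(Nat.choose (k / 2) (l / 2) : ℤ)
    else -(Nat.choose ((k - 1) / 2) (l / 2) : ℤ)
  else
    if k % 2 = 0 then 0
    else (Nat.choose ((k - 1) / 2) ((l - 1) / 2) : ℤ)

theorem stmt_16 (n m : ℕ) (hn : Odd n) (hm : Odd m) (hn0 : 0 < n) (hm0 : 0 < m) :
    Phi n (n + m - 1) + (-1 : ℤ) ^ ((n + 1) * (m + 1)) * Phi m (n + m - 1) =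
      2 * (Nat.choose ((n + m - 2) / 2) ((n - 1) / 2) : ℤ) ∧
    (2 : ℤ) ∣ Phi n (n + m - 1) + (-1 : ℤ) ^ ((n + 1) * (m + 1)) * Phi m (n + m - 1) := by
  obtain ⟨p, rfl⟩ := hn
  obtain ⟨q, rfl⟩ := hm
  have h1 : (2 * p + 1) % 2 = 1 := by omega
  have h2 : (2 * q + 1) % 2 = 1 := by omega
  have hk : (2 * p + 1 + (2 * q + 1) - 1) % 2 = 1 := by omega
  have hk1 : (2 * p + 1 + (2 * q + 1) - 1 - 1) / 2 = p + q := by omega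
  have hn1 : (2 * p + 1 - 1) / 2 = p := by omega
  have hm1 : (2 * q + 1 - 1) / 2 = q := by omega
  have hk2 : (2 * p + 1 + (2 * q + 1) - 2) / 2 = p + q := by omega
  have hsign : (-1 : ℤ) ^ ((2 * p + 1 + 1) * (2 * q + 1 + 1)) = 1 := by
    rw [show (2 * p + 1 + 1) * (2 * q + 1 + 1) = 2 * ((p + 1) * (2 * q + 2)) by ring,
      pow_mul]
    norm_num
  have hc : Nat.choose (p + q) q = Nat.choose (p + q) p := by
    rw [Nat.add_comm p q, Nat.choose_symm_add]
  simp only [Phi, h1, h2, hk, hk1, hn1, hm1, hk2, hsign]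
  norm_num [hc]
  constructor
  · ring
  · exact ⟨(Nat.choose (p + q) p : ℤ), by ring⟩
end
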